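/- arXiv:1202.6442 — 6 statements merged into one kernel-verified Lean document; each statement's English description precedes it below -/
import Mathlib

section
/- Let M and G be groups and let Γ be a normal subgroup of M. Let φ : Γ → G be a group homomorphism such that for every f ∈ M there exists x ∈ G with φ(f·γ·f⁻¹) = x·φ(γ)·x⁻¹ for all γ ∈ Γ. Then there exists a group homomorphism Ψ : M → Aut(φ(Γ)), from M to the automorphism group of the image subgroup φ(Γ) ≤ G, satisfying Ψ(f)(φ(γ)) = φ(f·γ·f⁻¹) for all f ∈ M and γ ∈ Γ. -/
/-!
Conjugation by `f` preserves `ker φ`, since by hypothesis `φ (f γ f⁻¹)` is a conjugate of `φ γ`.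
An action by automorphisms preserving a normal subgroup descends to the quotient, and
`Γ ⧸ ker φ ≃* φ(Γ)` transports the induced action of `M` to the image.
-/

section

variable {M H : Type*} [Group M] [Group H]

theorem Subgroup.map_mulAut_eq_self (ρ : M →* MulAut H) {K : Subgroup H}
    (hK : ∀ f, ∀ h ∈ K, ρ f h ∈ K) (f : M) : K.map (ρ f).toMonoidHom = K := by
  refine le_antisymm (Subgroup.map_le_iff_le_comap.mpr (hK f)) fun h hh => ?_
  refine ⟨ρ f⁻¹ h, hK f⁻¹ h hh, ?_⟩
  change (ρ f * ρ f⁻¹) h = h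
  rw [← map_mul, mul_inv_cancel, map_one, MulAut.one_apply]

def QuotientGroup.mulAutHom (ρ : M →* MulAut H) (K : Subgroup H) [K.Normal]
    (hK : ∀ f, ∀ h ∈ K, ρ f h ∈ K) : M →* MulAut (H ⧸ K) where
  toFun f := QuotientGroup.congr K K (ρ f) (K.map_mulAut_eq_self ρ hK f)
  map_one' := by
    ext x
    induction x using QuotientGroup.induction_on
    simp only [map_one]
    rfl
  map_mul' f g := by
    ext x
    induction x using QuotientGroup.induction_on
    simp only [map_mul]
    rfl

theorem QuotientGroup.mulAutHom_apply_mk (ρ : M →* MulAut H) (K : Subgroup H) [K.Normal]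
    (hK : ∀ f, ∀ h ∈ K, ρ f h ∈ K) (f : M) (h : H) :
    QuotientGroup.mulAutHom ρ K hK f (h : H ⧸ K) = (ρ f h : H ⧸ K) :=
  rfl

variable {G : Type*} [Group G]

noncomputable def MonoidHom.rangeMulAutHom (φ : H →* G) (ρ : M →* MulAut H)
    (hρ : ∀ f, ∀ h ∈ φ.ker, ρ f h ∈ φ.ker) : M →* MulAut φ.range :=
  (MulAut.congr (QuotientGroup.quotientKerEquivRange φ)).toMonoidHom.comp
    (QuotientGroup.mulAutHom ρ φ.ker hρ)

theorem MonoidHom.rangeMulAutHom_apply_rangeRestrict (φ : H →* G) (ρ : M →* MulAut H)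
    (hρ : ∀ f, ∀ h ∈ φ.ker, ρ f h ∈ φ.ker) (f : M) (h : H) :
    φ.rangeMulAutHom ρ hρ f (φ.rangeRestrict h) = φ.rangeRestrict (ρ f h) := by
  have hsymm : (QuotientGroup.quotientKerEquivRange φ).symm (φ.rangeRestrict h) = h := by
    rw [MulEquiv.symm_apply_eq]
    rfl
  simp only [rangeMulAutHom, MonoidHom.comp_apply, MulEquiv.coe_toMonoidHom,
    MulAut.congr_apply, MulEquiv.trans_apply, hsymm, QuotientGroup.mulAutHom_apply_mk]
  rfl

end

/-- If the class of `φ : Γ → G` (for `Γ ⊴ M`) is a global fixed point of the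
`M`-action on the deformation space, then there is a homomorphism `Ψ : M → Aut(φ(Γ))` with
`Ψ(f)(φ(γ)) = φ(fγf⁻¹)` for all `f ∈ M`, `γ ∈ Γ`. -/
theorem stmt2 {M G : Type*} [Group M] [Group G] (Γ : Subgroup M) (hN : Γ.Normal)
    (φ : Γ →* G)
    (hfix : ∀ f : M, ∃ x : G, ∀ γ : Γ,
      φ ⟨f * γ * f⁻¹, hN.conj_mem γ γ.2 f⟩ = x * φ γ * x⁻¹) :
    ∃ Ψ : M →* MulAut ↥φ.range, ∀ (f : M) (γ : Γ),
      (Ψ f ⟨φ γ, MonoidHom.mem_range.mpr ⟨γ, rfl⟩⟩ : G) =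
        φ ⟨f * γ * f⁻¹, hN.conj_mem γ γ.2 f⟩ := by
  have hker : ∀ f, ∀ γ ∈ φ.ker, MulAut.conjNormal (H := Γ) f γ ∈ φ.ker := by
    intro f γ hγ
    obtain ⟨x, hx⟩ := hfix f
    rw [MonoidHom.mem_ker] at hγ ⊢
    calc φ (MulAut.conjNormal f γ) = x * φ γ * x⁻¹ := hx γ
      _ = 1 := by rw [hγ, mul_one, mul_inv_cancel]
  exact ⟨φ.rangeMulAutHom MulAut.conjNormal hker, fun f γ =>
    congrArg Subtype.val (φ.rangeMulAutHom_apply_rangeRestrict MulAut.conjNormal hker f γ)⟩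
end

section
/- Let K be a field, n a natural number, M a group, and Γ a normal subgroup of M. Let φ : Γ → GL(n,K) be a group homomorphism such that for every f ∈ M there exists x ∈ GL(n,K) with φ(f·γ·f⁻¹) = x·φ(γ)·x⁻¹ for all γ ∈ Γ. Let W be the K-linear span inside the space of n×n matrices over K of the set {φ(γ) : γ ∈ Γ}. Then dim_K W ≤ n², and there exists a group homomorphism ρ : M → GL(W) (the group of K-linear automorphisms of W) such that ρ(f)(φ(γ)) = φ(f·γ·f⁻¹) for all f ∈ M and γ ∈ Γ, and such that for every f ∈ M one has ρ(f) = id_W if and only if φ(f·γ·f⁻¹) = φ(γ) for all γ ∈ Γ. -/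
/-!
Any `x` provided by the hypothesis gives a linear automorphism `A ↦ x A x⁻¹` of the matrix space
sending each `φ γ` to `φ (f γ f⁻¹)`, so it preserves the span `W` of `φ(Γ)`. A linear map on `W` is
determined by its values on the spanning family `φ(Γ)`, so the restriction to `W` does not depend on
the choice of `x`, and the same uniqueness makes `f ↦ ρ f` multiplicative.
-/

namespace Submodule

variable (R : Type*) {V ι : Type*} [Semiring R] [AddCommMonoid V] [Module R V] (v : ι → V)

def toSpanRange (i : ι) : span R (Set.range v) := ⟨v i, subset_span (Set.mem_range_self i)⟩

variable {R v}

@[simp]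
theorem coe_toSpanRange (i : ι) : (toSpanRange R v i : V) = v i :=
  rfl

theorem span_range_toSpanRange : span R (Set.range (toSpanRange R v)) = ⊤ := by
  convert span_span_coe_preimage (R := R) (s := Set.range v)
  ext ⟨w, hw⟩
  simp [toSpanRange, Subtype.ext_iff]

theorem linearMap_ext_spanRange {N : Type*} [AddCommMonoid N] [Module R N]
    {f g : span R (Set.range v) →ₗ[R] N} (h : ∀ i, f (toSpanRange R v i) = g (toSpanRange R v i)) :
    f = g :=
  LinearMap.ext_on_range span_range_toSpanRange h

def restrictSpanRange (T : V →ₗ[R] V) (hT : ∀ i, T (v i) ∈ span R (Set.range v)) :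
    Module.End R (span R (Set.range v)) :=
  T.restrict fun _ hx => (span_le (p := (span R (Set.range v)).comap T)).mpr
    (Set.forall_mem_range.mpr hT) hx

@[simp]
theorem coe_restrictSpanRange_apply (T : V →ₗ[R] V) (hT : ∀ i, T (v i) ∈ span R (Set.range v))
    (x : span R (Set.range v)) : (restrictSpanRange T hT x : V) = T x :=
  rfl

theorem linearEquiv_eq_one_iff_spanRange {e : span R (Set.range v) ≃ₗ[R] span R (Set.range v)} :
    e = 1 ↔ ∀ i, e (toSpanRange R v i) = toSpanRange R v i := by
  refine ⟨fun h i => by rw [h]; rfl, fun h => ?_⟩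
  exact LinearEquiv.toLinearMap_injective (linearMap_ext_spanRange h)

variable {G : Type*} [Group G]

theorem exists_monoidHom_spanRange_of_forall_exists (σ : G →* Equiv.Perm ι)
    (hT : ∀ g, ∃ T : V →ₗ[R] V, ∀ i, T (v i) = v (σ g i)) :
    ∃ ρ : G →* (span R (Set.range v) ≃ₗ[R] span R (Set.range v)),
      ∀ g i, ρ g (toSpanRange R v i) = toSpanRange R v (σ g i) := by
  choose T hT using hT
  let ρ : G →* Module.End R (span R (Set.range v)) :=
    { toFun g := restrictSpanRange (T g) fun i => hT g i ▸ subset_span (Set.mem_range_self _)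
      map_one' := linearMap_ext_spanRange fun i => Subtype.ext <| by simp [hT]
      map_mul' g h := linearMap_ext_spanRange fun i => Subtype.ext <| by simp [hT] }
  refine ⟨(LinearMap.GeneralLinearGroup.generalLinearEquiv R _).toMonoidHom.comp ρ.toHomUnits,
    fun g i => Subtype.ext ?_⟩
  simp [ρ, hT]

end Submodule

/-- If the class of a linear representation `φ : Γ → GL(n,K)` of a normal subgroup
`Γ ⊴ M` is a global fixed point of the `M`-action on the deformation space, then the `K`-span `W`
of `φ(Γ)` inside the `n×n` matrices has dimension at most `n²`, and there is a homomorphism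
`ρ : M → GL(W)` with `ρ(f)(φ(γ)) = φ(fγf⁻¹)`, and `ρ(f) = id_W` iff `φ(fγf⁻¹) = φ(γ)` for all
`γ ∈ Γ`. -/
theorem stmt4 (K : Type*) [Field K] (n : ℕ) {M : Type*} [Group M]
    (Γ : Subgroup M) (hN : Γ.Normal) (φ : Γ →* GL (Fin n) K)
    (hfix : ∀ f : M, ∃ x : GL (Fin n) K, ∀ γ : Γ,
      φ ⟨f * γ * f⁻¹, hN.conj_mem γ γ.2 f⟩ = x * φ γ * x⁻¹) :
    Module.finrank K
        (Submodule.span K (Set.range fun γ : Γ => ((φ γ : Matrix (Fin n) (Fin n) K)))) ≤ n ^ 2 ∧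
    ∃ ρ : M →*
        ((Submodule.span K (Set.range fun γ : Γ => ((φ γ : Matrix (Fin n) (Fin n) K)))) ≃ₗ[K]
         (Submodule.span K (Set.range fun γ : Γ => ((φ γ : Matrix (Fin n) (Fin n) K))))),
      (∀ (f : M) (γ : Γ),
        ((ρ f ⟨(φ γ : Matrix (Fin n) (Fin n) K), Submodule.subset_span ⟨γ, rfl⟩⟩ :
            Submodule.span K (Set.range fun γ : Γ => ((φ γ : Matrix (Fin n) (Fin n) K)))) :
          Matrix (Fin n) (Fin n) K)
          = φ ⟨f * γ * f⁻¹, hN.conj_mem γ γ.2 f⟩) ∧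
      (∀ f : M, ρ f = 1 ↔ ∀ γ : Γ, φ ⟨f * γ * f⁻¹, hN.conj_mem γ γ.2 f⟩ = φ γ) := by
  have := hN
  let v : Γ → Matrix (Fin n) (Fin n) K := fun γ => φ γ
  let σ : M →* Equiv.Perm Γ := (MulAut.toPerm Γ).comp MulAut.conjNormal
  have hσ (f : M) (γ : Γ) : σ f γ = ⟨f * γ * f⁻¹, hN.conj_mem γ γ.2 f⟩ :=
    Subtype.ext (MulAut.conjNormal_apply f γ)
  have hconj (f : M) : ∃ T : Matrix (Fin n) (Fin n) K →ₗ[K] Matrix (Fin n) (Fin n) K,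
      ∀ γ, T (v γ) = v (σ f γ) := by
    obtain ⟨x, hx⟩ := hfix f
    exact ⟨LinearMap.mulLeftRight K ((x : Matrix _ _ K), ((x⁻¹ : GL _ K) : Matrix _ _ K)),
      fun γ => by simp [v, hσ, hx]⟩
  obtain ⟨ρ, hρ⟩ := Submodule.exists_monoidHom_spanRange_of_forall_exists σ hconj
  refine ⟨?_, ρ, fun f γ => ?_, fun f => ?_⟩
  · calc _ ≤ Module.finrank K (Matrix (Fin n) (Fin n) K) := Submodule.finrank_le _
      _ = n ^ 2 := by simp [Module.finrank_matrix, sq]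
  · exact (congrArg Subtype.val (hρ f γ)).trans (by simp [v, hσ])
  · simp [Submodule.linearEquiv_eq_one_iff_spanRange, hρ, Subtype.ext_iff, Units.ext_iff, v, hσ]
end

section
/- Let K be a field, M a group, and Γ a normal subgroup of M whose centralizer in M is trivial, i.e. C_M(Γ) = {f ∈ M : f·γ = γ·f for all γ ∈ Γ} = {1}. Suppose there exist a natural number n and an injective group homomorphism φ : Γ → GL(n,K) such that for every f ∈ M there exists x ∈ GL(n,K) with φ(f·γ·f⁻¹) = x·φ(γ)·x⁻¹ for all γ ∈ Γ. Then M is K-linear; more precisely, there exist a finite-dimensional K-vector space W with dim_K W ≤ n² and an injective group homomorphism ρ : M → GL(W). -/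
/-!
Let `W` be the `K`-span of `φ(Γ)` inside the matrix algebra. Conjugation by the matrix `x_f`
attached to `f ∈ M` sends `φ(γ)` to `φ(f γ f⁻¹)`, so it preserves `W`, and on the spanning set
`φ(Γ)` it only depends on `f` through the conjugation action of `M` on `Γ`. Hence its restriction
to `W` is a representation of `M`, although `f ↦ x_f` itself need not be multiplicative. An element
acting trivially on `W` fixes every `φ(γ)`, so it centralizes `Γ` by injectivity of `φ`, and is
therefore trivial.
-/

open Submodule

section SpanRangeRep

variable {K V S M : Type*} [Semiring K] [AddCommMonoid V] [Module K V] [Monoid M]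
  [MulAction M S] {v : S → V} {L : M → V →ₗ[K] V}

theorem mapsTo_span_range_of_intertwines (hL : ∀ f s, L f (v s) = v (f • s)) (f : M) :
    ∀ w ∈ span K (Set.range v), L f w ∈ span K (Set.range v) := by
  change span K (Set.range v) ≤ (span K (Set.range v)).comap (L f)
  rw [span_le]
  rintro _ ⟨s, rfl⟩
  change L f (v s) ∈ span K (Set.range v)
  exact hL f s ▸ subset_span ⟨f • s, rfl⟩

/-- The maps `L f` need not compose correctly on all of `V`, but they do on the span of `v`,
since there they are determined by the action on `S`. -/
noncomputable def spanRangeRep (hL : ∀ f s, L f (v s) = v (f • s)) :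
    M →* Module.End K (span K (Set.range v)) where
  toFun f := (L f).restrict (mapsTo_span_range_of_intertwines hL f)
  map_one' := LinearMap.ext fun w => Subtype.ext <|
    LinearMap.eqOn_span' (f := L 1) (g := LinearMap.id)
      (by rintro _ ⟨s, rfl⟩; simp [hL]) w.2
  map_mul' f g := LinearMap.ext fun w => Subtype.ext <|
    LinearMap.eqOn_span' (f := L (f * g)) (g := L f ∘ₗ L g)
      (by rintro _ ⟨s, rfl⟩; simp [hL, mul_smul]) w.2

theorem spanRangeRep_injective [FaithfulSMul M S] (hL : ∀ f s, L f (v s) = v (f • s))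
    (hv : Function.Injective v) : Function.Injective (spanRangeRep hL) := by
  intro f g hfg
  refine eq_of_smul_eq_smul fun s => hv ?_
  have := congrArg Subtype.val (LinearMap.congr_fun hfg ⟨v s, subset_span ⟨s, rfl⟩⟩)
  rwa [← hL, ← hL]

end SpanRangeRep

theorem Subgroup.injective_conjNormal {G : Type*} [Group G] {H : Subgroup G} [H.Normal]
    (hc : ∀ g : G, (∀ h ∈ H, g * h = h * g) → g = 1) :
    Function.Injective (MulAut.conjNormal : G →* MulAut H) := by
  refine (injective_iff_map_eq_one _).2 fun g hg => hc g fun h hh => ?_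
  have : g * h * g⁻¹ = h := by
    simpa [MulAut.conjNormal_apply] using congrArg (fun e : MulAut H => (e ⟨h, hh⟩ : G)) hg
  rwa [mul_inv_eq_iff_eq_mul] at this

/-- If `Γ ⊴ M` has trivial centralizer in `M` and there is an injective
`φ : Γ → GL(n,K)` representing a global fixed point of the `M`-action on the deformation space,
then `M` is `K`-linear: there is a `K`-vector space `W` with `dim_K W ≤ n²` and an injective
homomorphism `ρ : M → GL(W)`. -/
theorem stmt6 (K : Type*) [Field K] {M : Type*} [Group M]
    (Γ : Subgroup M) (hN : Γ.Normal)
    (hc : ∀ f : M, (∀ γ ∈ Γ, f * γ = γ * f) → f = 1)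
    (n : ℕ) (φ : Γ →* GL (Fin n) K) (hφ : Function.Injective φ)
    (hfix : ∀ f : M, ∃ x : GL (Fin n) K, ∀ γ : Γ,
      φ ⟨f * γ * f⁻¹, hN.conj_mem γ γ.2 f⟩ = x * φ γ * x⁻¹) :
    ∃ W : Submodule K (Matrix (Fin n) (Fin n) K),
      Module.finrank K W ≤ n ^ 2 ∧
      ∃ ρ : M →* (W ≃ₗ[K] W), Function.Injective ρ := by
  choose x hx using hfix
  have := hN
  let : MulAction M Γ := MulAction.compHom Γ (MulAut.conjNormal (H := Γ))
  have : FaithfulSMul M Γ := ⟨fun h => Subgroup.injective_conjNormal hc (MulEquiv.ext h)⟩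
  let v : Γ → Matrix (Fin n) (Fin n) K := fun γ => φ γ
  have hv : Function.Injective v := fun _ _ h => hφ (Units.ext h)
  let L : M → Matrix (Fin n) (Fin n) K →ₗ[K] Matrix (Fin n) (Fin n) K :=
    fun f => LinearMap.mulLeftRight K ((x f : Matrix (Fin n) (Fin n) K), ↑(x f)⁻¹)
  have hL : ∀ f γ, L f (v γ) = v (f • γ) := fun f γ => by
    rw [LinearMap.mulLeftRight_apply]
    exact congrArg Units.val (hx f γ).symm
  refine ⟨span K (Set.range v), ?_, ?_⟩
  · calc Module.finrank K (span K (Set.range v))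
        ≤ Module.finrank K (Matrix (Fin n) (Fin n) K) := Submodule.finrank_le _
      _ = n ^ 2 := by simp [Module.finrank_matrix, sq]
  · exact ⟨(LinearMap.GeneralLinearGroup.generalLinearEquiv K _).toMonoidHom.comp
        (spanRangeRep hL).toHomUnits,
      (LinearMap.GeneralLinearGroup.generalLinearEquiv K _).injective.comp
        fun _ _ h => spanRangeRep_injective hL hv (congrArg Units.val h)⟩
end

section
/- Let M and G be groups, let Z(M) denote the center of M, and let T ⊆ M be a subset invariant under conjugation (i.e. f·t·f⁻¹ ∈ T for all f ∈ M, t ∈ T) satisfying: (a) the centralizer of T in M equals the center of M, i.e. C_M(T) = Z(M); and (b) for all t₁, t₂ ∈ T with t₁ ≠ t₂, one has t₁·t₂⁻¹ ∉ Z(M). Then for any group homomorphism φ : M → G, the restriction of φ to T is injective if and only if the kernel of φ is contained in Z(M). -/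
namespace MonoidHom

variable {M G : Type*} [Group M] [Group G] {φ : M →* G} {T : Set M}

theorem mul_comm_of_mem_ker_of_injOn (hT : ∀ f : M, ∀ t ∈ T, f * t * f⁻¹ ∈ T)
    (hφ : Set.InjOn φ T) {f t : M} (hf : f ∈ φ.ker) (ht : t ∈ T) : f * t = t * f := by
  have hconj : f * t * f⁻¹ = t := hφ (hT f t ht) ht (by simp [φ.mem_ker.mp hf])
  calc f * t = f * t * f⁻¹ * f := by group
    _ = t * f := by rw [hconj]

theorem injOn_of_ker_subset {S : Set M} (hT : ∀ t₁ ∈ T, ∀ t₂ ∈ T, t₁ ≠ t₂ → t₁ * t₂⁻¹ ∉ S)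
    (hker : ∀ f ∈ φ.ker, f ∈ S) : Set.InjOn φ T := by
  intro t₁ ht₁ t₂ ht₂ h
  by_contra hne
  exact hT t₁ ht₁ t₂ ht₂ hne (hker _ (by rw [← div_eq_mul_inv, φ.div_mem_ker_iff]; exact h))

end MonoidHom

/-- Let `T ⊆ M` be a conjugation-invariant subset with `C_M(T) = Z(M)` and such
that `t₁t₂⁻¹ ∉ Z(M)` for distinct `t₁, t₂ ∈ T`. Then a homomorphism `φ : M → G` is injective on
`T` if and only if `ker φ ⊆ Z(M)`. -/
theorem stmt8 {M G : Type*} [Group M] [Group G] (T : Set M)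
    (hinv : ∀ (f : M), ∀ t ∈ T, f * t * f⁻¹ ∈ T)
    (hcz : ∀ f : M, (∀ t ∈ T, f * t = t * f) ↔ f ∈ Subgroup.center M)
    (hne : ∀ t₁ ∈ T, ∀ t₂ ∈ T, t₁ ≠ t₂ → t₁ * t₂⁻¹ ∉ Subgroup.center M)
    (φ : M →* G) :
    Set.InjOn φ T ↔ ∀ f ∈ φ.ker, f ∈ Subgroup.center M :=
  ⟨fun hφ f hf => (hcz f).mp fun _ ht => φ.mul_comm_of_mem_ker_of_injOn hinv hφ hf ht,
    φ.injOn_of_ker_subset hne⟩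
end

section
/- Let K be a field, let M be a group acting on a set S, and let ι : S → M be an injective map satisfying: (a) equivariance, f·ι(s)·f⁻¹ = ι(f • s) for all f ∈ M and s ∈ S; (b) C_M(ι(S)) = Z(M), where C_M(ι(S)) is the centralizer of the image of ι and Z(M) is the center of M; and (c) for all s₁, s₂ ∈ S with s₁ ≠ s₂, ι(s₁)·ι(s₂)⁻¹ ∉ Z(M). Suppose there exist a natural number m and a group homomorphism φ : M → GL(m,K) whose kernel is contained in Z(M). Then the M-module K[S] (the K-vector space with basis S, on which f ∈ M acts by permuting basis vectors: f·e_s = e_{f • s}) has an M-invariant K-subspace V of finite codimension such that the composition of s ↦ e_s with the quotient map K[S] → K[S]/V is injective on S. -/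
/-!
Send `s` to the matrix `φ (ι s)` and let `V` be the kernel of the induced linear map
`K[S] → Mat_m(K)`. The quotient embeds in `Mat_m(K)`, so it is finite-dimensional; equivariance
of `ι` makes the map intertwine the permutation action with conjugation by `φ f`, so `V` is
invariant; and `φ (ι s₁) = φ (ι s₂)` would put `ι s₁ (ι s₂)⁻¹` in `ker φ ⊆ Z(M)`, which the
last hypothesis forbids for `s₁ ≠ s₂`.
-/

open Function Finsupp

section LinearCombination

variable {R S W : Type*}

theorem Finsupp.mapDomain_mem_ker_linearCombination [Semiring R] [AddCommMonoid W]
    [Module R W] {g : S → W} {σ : S → S} (L : W →ₗ[R] W) (hL : ∀ s, g (σ s) = L (g s))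
    {v : S →₀ R} (hv : v ∈ LinearMap.ker (linearCombination R g)) :
    mapDomain σ v ∈ LinearMap.ker (linearCombination R g) := by
  have hcomp : g ∘ σ = L ∘ g := funext hL
  rw [LinearMap.mem_ker] at hv ⊢
  rw [linearCombination_mapDomain, hcomp, ← apply_linearCombination, hv, map_zero]

theorem Finsupp.injective_mkQ_ker_linearCombination_single [Ring R] [AddCommGroup W]
    [Module R W] {g : S → W} (hg : Injective g) :
    Injective fun s => (LinearMap.ker (linearCombination R g)).mkQ (single s (1 : R)) := by
  refine Injective.of_comp (f := (LinearMap.ker (linearCombination R g)).liftQ _ le_rfl) ?_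
  convert hg using 1
  funext s
  simp

end LinearCombination

theorem injective_comp_of_ker_le_center {M S G : Type*} [Group M] [Group G] (ι : S → M)
    (hc : ∀ s₁ s₂ : S, s₁ ≠ s₂ → ι s₁ * (ι s₂)⁻¹ ∉ Subgroup.center M) (φ : M →* G)
    (hker : ∀ f ∈ φ.ker, f ∈ Subgroup.center M) : Injective (φ ∘ ι) := by
  intro s₁ s₂ h
  by_contra hne
  refine hc s₁ s₂ hne (hker _ ?_)
  rw [MonoidHom.mem_ker, map_mul, map_inv, mul_inv_eq_one]
  exact h

theorem stmt11_general (K : Type*) [Field K] {M S : Type*} [Group M] [MulAction M S]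
    (ι : S → M)
    (ha : ∀ (f : M) (s : S), f * ι s * f⁻¹ = ι (f • s))
    (hc : ∀ s₁ s₂ : S, s₁ ≠ s₂ → ι s₁ * (ι s₂)⁻¹ ∉ Subgroup.center M)
    (m : ℕ) (φ : M →* GL (Fin m) K)
    (hker : ∀ f ∈ φ.ker, f ∈ Subgroup.center M) :
    ∃ V : Submodule K (S →₀ K),
      (∀ (f : M), ∀ v ∈ V, Finsupp.mapDomain (fun s : S => f • s) v ∈ V) ∧
      FiniteDimensional K ((S →₀ K) ⧸ V) ∧
      Function.Injective (fun s : S => V.mkQ (Finsupp.single s (1 : K))) := by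
  set g : S → Matrix (Fin m) (Fin m) K := fun s => (φ (ι s) : Matrix (Fin m) (Fin m) K)
  refine ⟨LinearMap.ker (linearCombination K g), fun f _ hv => ?_,
    Submodule.CoFG.ker _, injective_mkQ_ker_linearCombination_single ?_⟩
  · refine mapDomain_mem_ker_linearCombination
      (LinearMap.mulLeft K (φ f : Matrix (Fin m) (Fin m) K) ∘ₗ
        LinearMap.mulRight K ((φ f)⁻¹ : GL (Fin m) K).val) (fun s => ?_) hv
    simp [g, ← ha, mul_assoc]
  · exact Units.val_injective.comp (injective_comp_of_ker_le_center ι hc φ hker)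

/-- Let `M` act on a set `S` and let `ι : S → M` be an injective equivariant map
(`f ι(s) f⁻¹ = ι(f • s)`) with `C_M(ι(S)) = Z(M)` and `ι(s₁)ι(s₂)⁻¹ ∉ Z(M)` for `s₁ ≠ s₂`. If
there is a homomorphism `φ : M → GL(m,K)` with kernel contained in `Z(M)`, then the permutation
`M`-module `K[S]` has an `M`-invariant subspace `V` of finite codimension such that
`s ↦ e_s mod V` is injective on `S`. -/
theorem stmt11 (K : Type*) [Field K] {M S : Type*} [Group M] [MulAction M S]
    (ι : S → M) (hι : Function.Injective ι)
    (ha : ∀ (f : M) (s : S), f * ι s * f⁻¹ = ι (f • s))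
    (hb : ∀ f : M, (∀ s : S, f * ι s = ι s * f) ↔ f ∈ Subgroup.center M)
    (hc : ∀ s₁ s₂ : S, s₁ ≠ s₂ → ι s₁ * (ι s₂)⁻¹ ∉ Subgroup.center M)
    (m : ℕ) (φ : M →* GL (Fin m) K)
    (hker : ∀ f ∈ φ.ker, f ∈ Subgroup.center M) :
    ∃ V : Submodule K (S →₀ K),
      (∀ (f : M), ∀ v ∈ V, Finsupp.mapDomain (fun s : S => f • s) v ∈ V) ∧
      FiniteDimensional K ((S →₀ K) ⧸ V) ∧
      Function.Injective (fun s : S => V.mkQ (Finsupp.single s (1 : K))) :=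
  stmt11_general K ι ha hc m φ hker
end

section
/- Let K be a field, let M be a group acting on a set S, and let ι : S → M be an injective map satisfying: (a) equivariance, f·ι(s)·f⁻¹ = ι(f • s) for all f ∈ M and s ∈ S; and (b) C_M(ι(S)) = Z(M), where C_M(ι(S)) is the centralizer of the image of ι and Z(M) is the center of M. Suppose the M-module K[S] (the K-vector space with basis S, on which f ∈ M acts by permuting basis vectors: f·e_s = e_{f • s}) has an M-invariant K-subspace V of finite codimension such that the composition of s ↦ e_s with the quotient map p : K[S] → K[S]/V is injective on S. Then there is a finite-dimensional K-vector space W (namely W = K[S]/V) and a group homomorphism ρ : M → GL(W) whose kernel is contained in Z(M). -/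
/-!
`M` acts on `K[S] ⧸ V` by permuting basis vectors, which gives `ρ`. If `ρ f = 1` then `f` fixes
the class of every `e_s`, so by injectivity of `s ↦ e_s mod V` it fixes every `s ∈ S`. By
equivariance `f` then commutes with every `ι s`, and the centralizer of `ι(S)` is `Z(M)`.
-/

namespace Representation

noncomputable def finsuppOfMulAction (K M S : Type*) [Semiring K] [Monoid M] [MulAction M S] :
    Representation K M (S →₀ K) where
  toFun f := Finsupp.lmapDomain K K (f • ·)
  map_one' := by ext; simp
  map_mul' f g := by ext; simp [mul_smul]

variable {K M S : Type*} [Monoid M] [MulAction M S]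

@[simp]
theorem finsuppOfMulAction_single [Semiring K] (f : M) (s : S) (c : K) :
    finsuppOfMulAction K M S f (Finsupp.single s c) = Finsupp.single (f • s) c :=
  Finsupp.mapDomain_single

theorem smul_eq_of_quotient_finsuppOfMulAction_eq_id [Ring K]
    {V : Submodule K (S →₀ K)} (hV : ∀ f, V ≤ V.comap (finsuppOfMulAction K M S f))
    (hinj : Function.Injective (fun s : S => V.mkQ (Finsupp.single s (1 : K))))
    {f : M} (hf : (finsuppOfMulAction K M S).quotient V hV f = LinearMap.id) (s : S) :
    f • s = s :=
  hinj <| by simpa using LinearMap.congr_fun hf (V.mkQ (Finsupp.single s 1))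

end Representation

theorem commute_of_smul_eq {M S : Type*} [Group M] [MulAction M S] {ι : S → M}
    (hι : ∀ (f : M) (s : S), f * ι s * f⁻¹ = ι (f • s)) {f : M} {s : S} (hs : f • s = s) :
    Commute f (ι s) :=
  mul_inv_eq_iff_eq_mul.mp ((hι f s).trans (congrArg ι hs))

theorem stmt12_general (K : Type*) [Field K] {M S : Type*} [Group M] [MulAction M S]
    (ι : S → M)
    (ha : ∀ (f : M) (s : S), f * ι s * f⁻¹ = ι (f • s))
    (hb : ∀ f : M, (∀ s : S, f * ι s = ι s * f) ↔ f ∈ Subgroup.center M)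
    (V : Submodule K (S →₀ K))
    (hV : ∀ (f : M), ∀ v ∈ V, Finsupp.mapDomain (fun s : S => f • s) v ∈ V)
    (hinj : Function.Injective (fun s : S => V.mkQ (Finsupp.single s (1 : K)))) :
    ∃ ρ : M →* (((S →₀ K) ⧸ V) ≃ₗ[K] ((S →₀ K) ⧸ V)),
      ∀ f : M, ρ f = 1 → f ∈ Subgroup.center M := by
  let ρV := (Representation.finsuppOfMulAction K M S).quotient V hV
  refine ⟨(LinearMap.GeneralLinearGroup.generalLinearEquiv K _).toMonoidHom.comp ρV.asGroupHom,
    fun f hf => (hb f).mp fun s => ?_⟩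
  have hfix : ρV f = LinearMap.id := LinearMap.ext fun x => LinearEquiv.congr_fun hf x
  exact commute_of_smul_eq ha
    (Representation.smul_eq_of_quotient_finsuppOfMulAction_eq_id hV hinj hfix s)

/-- Let `M` act on a set `S` and let `ι : S → M` be an injective equivariant map
(`f ι(s) f⁻¹ = ι(f • s)`) with `C_M(ι(S)) = Z(M)`. If the permutation `M`-module `K[S]` has an
`M`-invariant subspace `V` of finite codimension such that `s ↦ e_s mod V` is injective on `S`,
then there is a homomorphism `ρ : M → GL(K[S]/V)` into the linear automorphism group of the
finite-dimensional space `K[S]/V` whose kernel is contained in `Z(M)`. -/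
theorem stmt12 (K : Type*) [Field K] {M S : Type*} [Group M] [MulAction M S]
    (ι : S → M) (hι : Function.Injective ι)
    (ha : ∀ (f : M) (s : S), f * ι s * f⁻¹ = ι (f • s))
    (hb : ∀ f : M, (∀ s : S, f * ι s = ι s * f) ↔ f ∈ Subgroup.center M)
    (V : Submodule K (S →₀ K))
    (hV : ∀ (f : M), ∀ v ∈ V, Finsupp.mapDomain (fun s : S => f • s) v ∈ V)
    (hfin : FiniteDimensional K ((S →₀ K) ⧸ V))
    (hinj : Function.Injective (fun s : S => V.mkQ (Finsupp.single s (1 : K)))) :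
    ∃ ρ : M →* (((S →₀ K) ⧸ V) ≃ₗ[K] ((S →₀ K) ⧸ V)),
      ∀ f : M, ρ f = 1 → f ∈ Subgroup.center M :=
  stmt12_general K ι ha hb V hV hinj
end
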